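/- arXiv:1406.7210 — 2 statements merged into one kernel-verified Lean document; each statement's English description precedes it below -/
import Mathlib

section
/- Consider the discrete-time delayed system Σ: x(k+1) = f(x(k)) + g(x(k−d(k))) for k ∈ ℕ_0, with x(k) = φ(k) for k ∈ {−d_max,…,0}, where f(0) = g(0) = 0, f and g are non-decreasing on ℝ^n_+, both f and g are homogeneous of degree p = 0 with respect to the dilation map δ_λ^r, and there exists v > 0 with f(v) + g(v) < v. Suppose there exist T ∈ ℕ and a scalar 0 ≤ α < 1 such that sup_{k>T} d(k)/k = α. For each i, let ξ_i > 0 satisfy f_i(v)/v_i + (1/(1−α))^{(r_i/r_max)·ξ_i} · g_i(v)/v_i = 1. Then Σ is globally power-rate stable: for every 0 < ξ < min_{1≤i≤n} ξ_i and every solution x from a nonnegative initial condition, (x_i(k)/v_i)^{r_max/r_i} = O(k^{−ξ}) as k → ∞ for each i. -/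
open Real Filter Set Asymptotics

/-- A vector field `g` is non-decreasing on the nonnegative orthant. -/
def NonDecOn (n : ℕ) (g : (Fin n → ℝ) → Fin n → ℝ) : Prop :=
  ∀ x y : Fin n → ℝ, (∀ i, 0 ≤ y i) → (∀ i, y i ≤ x i) → ∀ i, g y i ≤ g x i

/-- `f` is homogeneous of degree `p` with respect to the dilation map `δ_λ^r`. -/
def Homogeneous (n : ℕ) (r : Fin n → ℝ) (p : ℝ) (f : (Fin n → ℝ) → Fin n → ℝ) : Prop :=
  ∀ (x : Fin n → ℝ) (l : ℝ), 0 < l →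
    f (fun i => l ^ r i * x i) = fun i => l ^ p * (l ^ r i * f x i)

/-- Assumption C on the delay: `d : ℕ₀ → ℕ₀` satisfies `k - d(k) → ∞`, and
`dmax ∈ ℕ₀` bounds the initial-history window: `k - d(k) ≥ -dmax` for all `k`. -/
def DelayC (d : ℕ → ℕ) (dmax : ℕ) : Prop :=
  Tendsto (fun k : ℕ => (k : ℤ) - (d k : ℤ)) atTop atTop ∧
    ∀ k : ℕ, -(dmax : ℤ) ≤ (k : ℤ) - (d k : ℤ)

/-- A solution of the discrete delayed system `x(k+1) = f(x(k)) + g(x(k - d(k)))`, `k ∈ ℕ₀`,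
with initial condition `φ` on `{-dmax, …, 0}`. -/
def IsSolutionD (n : ℕ) (f g : (Fin n → ℝ) → Fin n → ℝ) (d : ℕ → ℕ) (dmax : ℕ)
    (φ x : ℤ → Fin n → ℝ) : Prop :=
  (∀ k : ℤ, -(dmax : ℤ) ≤ k → k ≤ 0 → x k = φ k) ∧
    ∀ k : ℕ, x ((k : ℤ) + 1) = f (x (k : ℤ)) + g (x ((k : ℤ) - (d k : ℤ)))

/-- A nonnegative initial condition on `{-dmax, …, 0}`. -/
def NonnegInitD (n : ℕ) (dmax : ℕ) (φ : ℤ → Fin n → ℝ) : Prop :=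
  ∀ k : ℤ, -(dmax : ℤ) ≤ k → k ≤ 0 → ∀ i, 0 ≤ φ k i

/-- Global asymptotic stability of the discrete delayed system: Lyapunov stability of the
origin plus global attractivity over nonnegative initial conditions. -/
def GASD (n : ℕ) (f g : (Fin n → ℝ) → Fin n → ℝ) (d : ℕ → ℕ) (dmax : ℕ) : Prop :=
  (∀ ε > (0 : ℝ), ∃ δ > (0 : ℝ), ∀ φ x : ℤ → Fin n → ℝ,
      NonnegInitD n dmax φ → IsSolutionD n f g d dmax φ x →
      (∀ k : ℤ, -(dmax : ℤ) ≤ k → k ≤ 0 → ‖φ k‖ < δ) →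
      ∀ k : ℕ, ‖x (k : ℤ)‖ < ε) ∧
  ∀ φ x : ℤ → Fin n → ℝ, NonnegInitD n dmax φ → IsSolutionD n f g d dmax φ x →
      Tendsto (fun k : ℕ => x (k : ℤ)) atTop (nhds 0)

/-!
A nonnegative solution is compared, through the monotonicity of `f` and `g`, with the
supersolution `m ↦ δ^r_{c μ(m)}(v)`, where `μ(m) = (m + K)^{-ξ/r_max}`; homogeneity of degree zero
lets the scale `c` be as large as the finitely many initial values require. That `δ^r_{μ(m)}(v)`
is a supersolution reads coordinatewise, with `e_j = ξ r_j / r_max`,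
`((k+1+K)/(k+K))^{e_j} f_j(v) + ((k+1+K)/(k-d(k)+K))^{e_j} g_j(v) ≤ v_j`.
The first ratio is close to `1` for large `K`, the second is eventually below any
`γ > 1/(1-α)` because `d(k) ≤ αk`, and `ξ < ξ_j` makes the defining identity of `ξ_j` a strict
inequality with room for both.
-/

open Filter Topology

noncomputable def dilation {n : ℕ} (r : Fin n → ℝ) (l : ℝ) (v : Fin n → ℝ) : Fin n → ℝ :=
  fun i => l ^ r i * v i

section Dilation

variable {n : ℕ} {r : Fin n → ℝ} {l l' : ℝ} {v w : Fin n → ℝ}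

theorem dilation_le_dilation (hl : 0 ≤ l) (h : v ≤ w) : dilation r l v ≤ dilation r l w :=
  fun i => mul_le_mul_of_nonneg_left (h i) (Real.rpow_nonneg hl _)

theorem dilation_le_dilation_of_le_scale (hr : ∀ i, 0 ≤ r i) (hv : 0 ≤ v) (hl : 0 ≤ l)
    (h : l ≤ l') : dilation r l v ≤ dilation r l' v :=
  fun i => mul_le_mul_of_nonneg_right (Real.rpow_le_rpow hl h (hr i)) (hv i)

theorem dilation_add : dilation r l (v + w) = dilation r l v + dilation r l w :=
  funext fun i => mul_add _ (v i) (w i)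

theorem dilation_mul {a b : ℝ} (ha : 0 ≤ a) (hb : 0 ≤ b) :
    dilation r (a * b) v = dilation r a (dilation r b v) :=
  funext fun i => by simp only [dilation, Real.mul_rpow ha hb, mul_assoc]

theorem eventually_le_dilation (hr : ∀ i, 0 < r i) (hv : ∀ i, 0 < v i) (w : Fin n → ℝ) :
    ∀ᶠ l in atTop, w ≤ dilation r l v :=
  eventually_all.2 fun i =>
    ((tendsto_rpow_atTop (hr i)).atTop_mul_const (hv i)).eventually_ge_atTop (w i)

theorem Homogeneous.map_dilation {f : (Fin n → ℝ) → Fin n → ℝ} (hf : Homogeneous n r 0 f)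
    (hl : 0 < l) : f (dilation r l v) = dilation r l (f v) := by
  have h := hf v l hl
  simp only [Real.rpow_zero, one_mul] at h
  exact h

end Dilation

theorem NonDecOn.apply_nonneg {n : ℕ} {f : (Fin n → ℝ) → Fin n → ℝ} (hf : NonDecOn n f)
    (hf0 : f 0 = 0) {v : Fin n → ℝ} (hv : 0 ≤ v) : 0 ≤ f v := by
  intro i
  simpa only [hf0] using hf v 0 (fun _ => le_rfl) hv i

theorem induction_on_history (a : ℕ) {P : ℤ → Prop}
    (base : ∀ m : ℤ, -(a : ℤ) ≤ m → m ≤ 0 → P m)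
    (step : ∀ k : ℕ, (∀ m : ℤ, -(a : ℤ) ≤ m → m ≤ k → P m) → P (k + 1)) :
    ∀ m : ℤ, -(a : ℤ) ≤ m → P m := by
  suffices H : ∀ k : ℕ, ∀ m : ℤ, -(a : ℤ) ≤ m → m ≤ k → P m from
    fun m hm => H m.toNat m hm (Int.self_le_toNat m)
  intro k
  induction k with
  | zero => exact fun m h1 h2 => base m h1 (mod_cast h2)
  | succ k ih =>
    intro m h1 h2
    rcases (show m ≤ k ∨ m = k + 1 by omega) with h | rfl
    · exact ih m h1 h
    · exact step k ih

def IsSupersolutionFrom {n : ℕ} (f g : (Fin n → ℝ) → Fin n → ℝ) (d : ℕ → ℕ) (N : ℕ)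
    (y : ℤ → Fin n → ℝ) : Prop :=
  ∀ k : ℕ, N ≤ k → f (y k) + g (y ((k : ℤ) - d k)) ≤ y ((k : ℤ) + 1)

section Comparison

variable {n : ℕ} {f g : (Fin n → ℝ) → Fin n → ℝ} {d : ℕ → ℕ} {dmax : ℕ}
  {φ x : ℤ → Fin n → ℝ}

theorem IsSupersolutionFrom.dilation {r : Fin n → ℝ} {N : ℕ} {y : ℤ → Fin n → ℝ}
    (hy : IsSupersolutionFrom f g d N y) (hf : Homogeneous n r 0 f) (hg : Homogeneous n r 0 g)
    {c : ℝ} (hc : 0 < c) : IsSupersolutionFrom f g d N fun m => dilation r c (y m) :=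
  fun k hk => by
    rw [hf.map_dilation hc, hg.map_dilation hc, ← dilation_add]
    exact dilation_le_dilation hc.le (hy k hk)

theorem IsSolutionD.nonneg (hf : NonDecOn n f) (hg : NonDecOn n g) (hf0 : f 0 = 0)
    (hg0 : g 0 = 0) (hd : ∀ k : ℕ, -(dmax : ℤ) ≤ k - d k) (hφ : NonnegInitD n dmax φ)
    (hx : IsSolutionD n f g d dmax φ x) : ∀ m : ℤ, -(dmax : ℤ) ≤ m → 0 ≤ x m := by
  refine induction_on_history dmax (fun m h1 h2 => hx.1 m h1 h2 ▸ hφ m h1 h2) fun k ih => ?_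
  rw [hx.2 k]
  exact add_nonneg (hf.apply_nonneg hf0 (ih k (by omega) le_rfl))
    (hg.apply_nonneg hg0 (ih _ (hd k) (by omega)))

theorem IsSolutionD.le_of_isSupersolutionFrom (hf : NonDecOn n f) (hg : NonDecOn n g)
    (hd : ∀ k : ℕ, -(dmax : ℤ) ≤ k - d k) (hx : IsSolutionD n f g d dmax φ x)
    (hx0 : ∀ m : ℤ, -(dmax : ℤ) ≤ m → 0 ≤ x m) {N : ℕ} {y : ℤ → Fin n → ℝ}
    (hy : IsSupersolutionFrom f g d N y) (hinit : ∀ m : ℤ, -(dmax : ℤ) ≤ m → m ≤ N → x m ≤ y m) :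
    ∀ m : ℤ, -(dmax : ℤ) ≤ m → x m ≤ y m := by
  refine induction_on_history dmax (fun m h1 h2 => hinit m h1 (by omega)) fun k ih => ?_
  rcases le_or_gt ((k : ℤ) + 1) N with hkN | hNk
  · exact hinit _ (by omega) hkN
  have hk : -(dmax : ℤ) ≤ k := by omega
  rw [hx.2 k]
  calc f (x k) + g (x (k - d k)) ≤ f (y k) + g (y (k - d k)) :=
        add_le_add (hf _ _ (hx0 k hk) (ih k hk le_rfl))
          (hg _ _ (hx0 _ (hd k)) (ih _ (hd k) (by omega)))
    _ ≤ y (k + 1) := hy k (by omega)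

theorem IsSolutionD.exists_le_dilation (hf : NonDecOn n f) (hg : NonDecOn n g)
    {r : Fin n → ℝ} (hfh : Homogeneous n r 0 f) (hgh : Homogeneous n r 0 g)
    (hd : ∀ k : ℕ, -(dmax : ℤ) ≤ k - d k) (hx : IsSolutionD n f g d dmax φ x)
    (hx0 : ∀ m : ℤ, -(dmax : ℤ) ≤ m → 0 ≤ x m) (hr : ∀ i, 0 < r i) {v : Fin n → ℝ}
    (hv : ∀ i, 0 < v i) {μ : ℤ → ℝ} (hμ : ∀ m, 0 < μ m) (hμanti : Antitone μ) {N : ℕ}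
    (hsuper : IsSupersolutionFrom f g d N fun m => dilation r (μ m) v) :
    ∃ c > 0, ∀ m : ℤ, -(dmax : ℤ) ≤ m → x m ≤ dilation r (c * μ m) v := by
  obtain ⟨l, hl, hlx⟩ := ((eventually_gt_atTop 0).and ((Finset.Icc (-(dmax : ℤ)) N).eventually_all.2
    fun m _ => eventually_le_dilation hr hv (x m))).exists
  have hc : 0 < l / μ N := div_pos hl (hμ N)
  refine ⟨l / μ N, hc, hx.le_of_isSupersolutionFrom hf hg hd hx0 (N := N) ?_ fun m h1 h2 => ?_⟩
  · simpa only [dilation_mul hc.le (hμ _).le] using hsuper.dilation hfh hgh hc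
  · calc x m ≤ dilation r l v := hlx m (Finset.mem_Icc.2 ⟨h1, h2⟩)
      _ ≤ dilation r (l / μ N * μ m) v := by
        refine dilation_le_dilation_of_le_scale (fun i => (hr i).le) (fun i => (hv i).le) hl.le ?_
        rw [div_mul_eq_mul_div, le_div_iff₀ (hμ N)]
        exact mul_le_mul_of_nonneg_left (hμanti h2) hl.le

end Comparison

/-- `(m + K)^{-s}`, extended to the history `m < 0` by its value `K^{-s}` at `0`. -/
noncomputable def powerWeight (K s : ℝ) (m : ℤ) : ℝ :=
  ((m.toNat : ℝ) + K) ^ (-s)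

section PowerWeight

variable {K s : ℝ}

theorem powerWeight_pos (hK : 0 < K) (m : ℤ) : 0 < powerWeight K s m :=
  Real.rpow_pos_of_pos (by positivity) _

theorem powerWeight_antitone (hK : 0 < K) (hs : 0 ≤ s) : Antitone (powerWeight K s) :=
  fun _ _ h => Real.rpow_le_rpow_of_nonpos (by positivity)
    (by gcongr; exact Int.toNat_le_toNat h) (neg_nonpos.2 hs)

theorem rpow_powerWeight_of_nonneg (hK : 0 < K) {m : ℤ} (hm : 0 ≤ m) (a : ℝ) :
    powerWeight K s m ^ a = ((m : ℝ) + K) ^ (-(s * a)) := by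
  have hcast : ((m.toNat : ℕ) : ℝ) = m := by
    rw [← Int.cast_natCast, Int.toNat_of_nonneg hm]
  rw [powerWeight, hcast, ← Real.rpow_mul (by rw [← hcast]; positivity), neg_mul]

end PowerWeight

theorem rpow_neg_mul_add_rpow_neg_mul_le {A B C a c e p q w : ℝ} (hA : 0 < A) (hB : 0 < B)
    (hC : 0 < C) (he : 0 ≤ e) (hp : 0 ≤ p) (hq : 0 ≤ q) (hBA : B / A ≤ a) (hBC : B / C ≤ c)
    (h : a ^ e * p + c ^ e * q ≤ w) : A ^ (-e) * p + C ^ (-e) * q ≤ B ^ (-e) * w := by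
  have hsplit : ∀ {D : ℝ}, 0 < D → D ^ (-e) = B ^ (-e) * (B / D) ^ e := fun hD => by
    rw [Real.div_rpow hB.le hD.le, Real.rpow_neg hB.le, Real.rpow_neg hD.le]
    field_simp
  rw [hsplit hA, hsplit hC]
  calc B ^ (-e) * (B / A) ^ e * p + B ^ (-e) * (B / C) ^ e * q
      = B ^ (-e) * ((B / A) ^ e * p + (B / C) ^ e * q) := by ring
    _ ≤ B ^ (-e) * (a ^ e * p + c ^ e * q) := by gcongr
    _ ≤ B ^ (-e) * w := by gcongr

theorem isSupersolutionFrom_powerWeight {n : ℕ} {f g : (Fin n → ℝ) → Fin n → ℝ} {d : ℕ → ℕ}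
    {r v : Fin n → ℝ} {K s γ : ℝ} {N : ℕ} (hf : Homogeneous n r 0 f) (hg : Homogeneous n r 0 g)
    (hfv : 0 ≤ f v) (hgv : 0 ≤ g v) (hr : ∀ j, 0 ≤ r j) (hK : 0 < K) (hs : 0 ≤ s)
    (hcoef : ∀ j, (1 + K⁻¹) ^ (s * r j) * f v j + γ ^ (s * r j) * g v j ≤ v j)
    (hdelay : ∀ k ≥ N, (d k : ℤ) ≤ k ∧ (k : ℝ) + 1 + K ≤ γ * ((k : ℝ) - d k + K)) :
    IsSupersolutionFrom f g d N fun m => dilation r (powerWeight K s m) v := by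
  intro k hk j
  obtain ⟨hdk, hstep⟩ := hdelay k hk
  have hdk' : (d k : ℝ) ≤ k := mod_cast hdk
  simp only [hf.map_dilation (powerWeight_pos hK _), hg.map_dilation (powerWeight_pos hK _),
    Pi.add_apply, dilation]
  rw [rpow_powerWeight_of_nonneg hK (by positivity), rpow_powerWeight_of_nonneg hK (by omega),
    rpow_powerWeight_of_nonneg hK (by positivity)]
  push_cast
  refine rpow_neg_mul_add_rpow_neg_mul_le (by positivity) (by positivity) (by linarith)
    (mul_nonneg hs (hr j)) (hfv j) (hgv j) ?_ ?_ (hcoef j)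
  · rw [div_le_iff₀ (by positivity), add_mul, one_mul, inv_mul_eq_div]
    have : 1 ≤ ((k : ℝ) + K) / K := (one_le_div hK).2 (by linarith [k.cast_nonneg (α := ℝ)])
    linarith
  · rw [div_le_iff₀ (by linarith)]
    linarith

theorem isBigO_rpow_of_le_rpow_powerWeight {u : ℕ → ℝ} {a p c K ξ : ℝ} (ha : 0 < a)
    (hp : 0 < p) (hc : 0 ≤ c) (hK : 0 < K) (hξ : 0 ≤ ξ) (hu0 : ∀ k, 0 ≤ u k)
    (hu : ∀ k : ℕ, u k ≤ (c * powerWeight K (ξ / p) k) ^ a) :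
    (fun k => u k ^ (p / a)) =O[atTop] fun k : ℕ => (k : ℝ) ^ (-ξ) := by
  refine IsBigO.of_bound (c ^ p) ?_
  filter_upwards [eventually_ge_atTop 1] with k hk
  have hk : (1 : ℝ) ≤ k := mod_cast hk
  have hw := (powerWeight_pos (s := ξ / p) hK k).le
  rw [Real.norm_of_nonneg (Real.rpow_nonneg (hu0 k) _),
    Real.norm_of_nonneg (Real.rpow_nonneg (by positivity) _)]
  calc u k ^ (p / a) ≤ ((c * powerWeight K (ξ / p) k) ^ a) ^ (p / a) :=
        Real.rpow_le_rpow (hu0 k) (hu k) (by positivity)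
    _ = c ^ p * ((k : ℝ) + K) ^ (-ξ) := by
        rw [← Real.rpow_mul (by positivity), mul_div_cancel₀ _ ha.ne', Real.mul_rpow hc hw,
          rpow_powerWeight_of_nonneg hK (by positivity), div_mul_cancel₀ _ hp.ne']
        push_cast; ring_nf
    _ ≤ c ^ p * (k : ℝ) ^ (-ξ) :=
        mul_le_mul_of_nonneg_left (Real.rpow_le_rpow_of_nonpos (by positivity) (by linarith)
          (neg_nonpos.2 hξ)) (by positivity)

theorem add_rpow_mul_lt_of_add_rpow_mul_eq {F G V q e E : ℝ} (hq : 1 < q) (he : e < E)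
    (hG : 0 ≤ G) (hlt : F + G < V) (heq : F + q ^ E * G = V) : F + q ^ e * G < V := by
  have hGpos : 0 < G := hG.lt_of_ne fun h => by rw [← h] at hlt heq; linarith
  nlinarith [Real.rpow_lt_rpow_of_exponent_lt hq he]

section ParameterChoice

variable {ι : Type*} [Finite ι] {F G V e : ι → ℝ}

theorem exists_gt_forall_add_rpow_mul_lt {q : ℝ} (hq : 0 < q)
    (h : ∀ j, F j + q ^ e j * G j < V j) : ∃ γ > q, ∀ j, F j + γ ^ e j * G j < V j := by
  have hnear : ∀ᶠ γ in 𝓝 q, ∀ j, F j + γ ^ e j * G j < V j := eventually_all.2 fun j =>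
    (continuousAt_const.add ((Real.continuousAt_rpow_const _ _ (Or.inl hq.ne')).mul
      continuousAt_const)).eventually_lt continuousAt_const (h j)
  obtain ⟨γ, hγ, hγq⟩ := ((hnear.filter_mono nhdsWithin_le_nhds).and
    (self_mem_nhdsWithin : Set.Ioi q ∈ 𝓝[>] q)).exists
  exact ⟨γ, hγq, hγ⟩

theorem exists_pos_forall_one_add_inv_rpow_mul_add_le (h : ∀ j, F j + G j < V j) :
    ∃ K > 0, ∀ j, (1 + K⁻¹) ^ e j * F j + G j ≤ V j := by
  have hlim : ∀ j, Tendsto (fun K : ℝ => (1 + K⁻¹) ^ e j * F j + G j) atTop (𝓝 (F j + G j)) :=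
    fun j => by
      have h1 : Tendsto (fun K : ℝ => 1 + K⁻¹) atTop (𝓝 1) := by
        simpa using tendsto_inv_atTop_zero.const_add (1 : ℝ)
      simpa using ((h1.rpow_const (Or.inl one_ne_zero)).mul_const (F j)).add_const (G j)
  exact ((eventually_gt_atTop 0).and (eventually_all.2 fun j =>
    ((hlim j).eventually_lt_const (h j)).mono fun _ => le_of_lt)).exists

end ParameterChoice

theorem eventually_delay_step {d : ℕ → ℕ} {T : ℕ} {α γ K : ℝ}
    (hub : α ∈ upperBounds ((fun k : ℕ => (d k : ℝ) / (k : ℝ)) '' {k : ℕ | T < k}))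
    (hα0 : 0 ≤ α) (hα1 : α < 1) (hγ : 1 / (1 - α) < γ) (hK : 0 ≤ K) :
    ∀ᶠ k : ℕ in atTop, (d k : ℤ) ≤ k ∧ (k : ℝ) + 1 + K ≤ γ * ((k : ℝ) - d k + K) := by
  have hγα : 1 < γ * (1 - α) := by rwa [div_lt_iff₀ (by linarith)] at hγ
  have hγ1 : 1 ≤ γ := by nlinarith
  filter_upwards [eventually_gt_atTop T, (tendsto_natCast_atTop_atTop.const_mul_atTop
    (by linarith : 0 < γ * (1 - α) - 1)).eventually_ge_atTop 1] with k hkT hk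
  have hkpos : (0 : ℝ) < k := mod_cast T.zero_le.trans_lt hkT
  have hdk : (d k : ℝ) ≤ α * k := (div_le_iff₀ hkpos).1 (hub ⟨k, hkT, rfl⟩)
  refine ⟨by exact_mod_cast (show (d k : ℝ) ≤ k by nlinarith), ?_⟩
  nlinarith [mul_le_mul_of_nonneg_left hdk (by linarith : (0 : ℝ) ≤ γ),
    mul_le_mul_of_nonneg_right hγ1 hK]

theorem exists_isSupersolutionFrom_powerWeight {n : ℕ} {f g : (Fin n → ℝ) → Fin n → ℝ}
    {d : ℕ → ℕ} {T : ℕ} {r v : Fin n → ℝ} {α s : ℝ} (hf : Homogeneous n r 0 f)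
    (hg : Homogeneous n r 0 g) (hfv : 0 ≤ f v) (hgv : 0 ≤ g v) (hr : ∀ j, 0 ≤ r j) (hs : 0 ≤ s)
    (hub : α ∈ upperBounds ((fun k : ℕ => (d k : ℝ) / (k : ℝ)) '' {k : ℕ | T < k}))
    (hα0 : 0 ≤ α) (hα1 : α < 1) (hmargin : ∀ j, f v j + (1 / (1 - α)) ^ (s * r j) * g v j < v j) :
    ∃ K > 0, ∃ N, IsSupersolutionFrom f g d N fun m => dilation r (powerWeight K s m) v := by
  obtain ⟨γ, hγ, hγv⟩ := exists_gt_forall_add_rpow_mul_lt (one_div_pos.2 (sub_pos.2 hα1)) hmargin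
  obtain ⟨K, hK, hKv⟩ := exists_pos_forall_one_add_inv_rpow_mul_add_le hγv
  obtain ⟨N, hN⟩ := eventually_atTop.1 (eventually_delay_step hub hα0 hα1 hγ hK.le)
  exact ⟨K, hK, N, isSupersolutionFrom_powerWeight hf hg hfv hgv hr hK hs hKv hN⟩

theorem discrete_homogeneous_nondecreasing_power_rate_stability_general
    (n : ℕ) (f g : (Fin n → ℝ) → Fin n → ℝ)
    (r : Fin n → ℝ) (hr : ∀ i, 0 < r i)
    (rmax : ℝ) (hrmax_ub : ∀ i, r i ≤ rmax)
    (hf0 : f 0 = 0) (hg0 : g 0 = 0)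
    (hfmono : NonDecOn n f) (hgmono : NonDecOn n g)
    (hfhom : Homogeneous n r 0 f) (hghom : Homogeneous n r 0 g)
    (d : ℕ → ℕ) (dmax : ℕ) (hd : DelayC d dmax)
    (T : ℕ) (α : ℝ) (hα0 : 0 ≤ α) (hα1 : α < 1)
    (hsup : IsLUB ((fun k : ℕ => (d k : ℝ) / (k : ℝ)) '' {k : ℕ | T < k}) α)
    (v : Fin n → ℝ) (hv : ∀ i, 0 < v i) (hfgv : ∀ i, f v i + g v i < v i)
    (ξ : Fin n → ℝ)
    (hξeq : ∀ i, f v i / v i +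
        (1 / (1 - α)) ^ ((r i / rmax) * ξ i) * (g v i / v i) = 1) :
    ∀ ξ' : ℝ, 0 < ξ' → (∀ i, ξ' < ξ i) →
      ∀ φ x : ℤ → Fin n → ℝ, NonnegInitD n dmax φ → IsSolutionD n f g d dmax φ x →
        ∀ i, (fun k : ℕ => (x (k : ℤ) i / v i) ^ (rmax / r i)) =O[atTop]
          fun k : ℕ => (k : ℝ) ^ (-ξ') := by
  intro ξ' hξ' hξ'lt φ x hφ hx i
  have hrmax : 0 < rmax := (hr i).trans_le (hrmax_ub i)
  have hs : 0 ≤ ξ' / rmax := div_nonneg hξ'.le hrmax.le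
  have hfv := hfmono.apply_nonneg hf0 fun j => (hv j).le
  have hgv := hgmono.apply_nonneg hg0 fun j => (hv j).le
  have hE : ∀ j, f v j + (1 / (1 - α)) ^ (r j / rmax * ξ j) * g v j = v j := fun j => by
    have h := hξeq j
    rwa [← mul_div_assoc, ← add_div, div_eq_one_iff_eq (hv j).ne'] at h
  have hq : 1 < 1 / (1 - α) := by
    refine (one_lt_div (by linarith)).2 (sub_lt_self 1 (hα0.lt_of_ne fun hα => ?_))
    have h := hE i
    rw [← hα, sub_zero, div_one, Real.one_rpow, one_mul] at h
    linarith [hfgv i]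
  have hmargin : ∀ j, f v j + (1 / (1 - α)) ^ (ξ' / rmax * r j) * g v j < v j := fun j =>
    add_rpow_mul_lt_of_add_rpow_mul_eq hq (by
      rw [div_mul_comm]; exact mul_lt_mul_of_pos_left (hξ'lt j) (div_pos (hr j) hrmax))
      (hgv j) (hfgv j) (hE j)
  obtain ⟨K, hK, N, hsuper⟩ := exists_isSupersolutionFrom_powerWeight hfhom hghom hfv hgv
    (fun j => (hr j).le) hs hsup.1 hα0 hα1 hmargin
  have hx0 := hx.nonneg hfmono hgmono hf0 hg0 hd.2 hφ
  obtain ⟨c, hc, hxc⟩ := hx.exists_le_dilation hfmono hgmono hfhom hghom hd.2 hx0 hr hv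
    (powerWeight_pos hK) (powerWeight_antitone hK hs) hsuper
  exact isBigO_rpow_of_le_rpow_powerWeight (hr i) hrmax hc.le hK hξ'.le
    (fun k => div_nonneg (hx0 k (by omega) i) (hv i).le)
    fun k => (div_le_iff₀ (hv i)).2 (hxc k (by omega) i)

/-- Corollary (discrete power-rate stability, degree-zero case, unbounded delays with
`sup_{k>T} d(k)/k = α < 1`): if `v > 0` satisfies `f(v) + g(v) < v` and for each `i`,
`ξᵢ > 0` solves `fᵢ(v)/vᵢ + (1/(1-α))^{(rᵢ/rmax) ξᵢ} gᵢ(v)/vᵢ = 1`, then for every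
`0 < ξ < minᵢ ξᵢ`, every solution from a nonnegative initial condition satisfies
`(xᵢ(k)/vᵢ)^{rmax/rᵢ} = O(k^{-ξ})` as `k → ∞`. -/
theorem discrete_homogeneous_nondecreasing_power_rate_stability
    (n : ℕ) (f g : (Fin n → ℝ) → Fin n → ℝ)
    (r : Fin n → ℝ) (hr : ∀ i, 0 < r i)
    (rmax : ℝ) (hrmax_ub : ∀ i, r i ≤ rmax) (hrmax_mem : ∃ i, r i = rmax)
    (hf0 : f 0 = 0) (hg0 : g 0 = 0)
    (hfc : Continuous f) (hgc : Continuous g)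
    (hfmono : NonDecOn n f) (hgmono : NonDecOn n g)
    (hfhom : Homogeneous n r 0 f) (hghom : Homogeneous n r 0 g)
    (d : ℕ → ℕ) (dmax : ℕ) (hd : DelayC d dmax)
    (T : ℕ) (α : ℝ) (hα0 : 0 ≤ α) (hα1 : α < 1)
    (hsup : IsLUB ((fun k : ℕ => (d k : ℝ) / (k : ℝ)) '' {k : ℕ | T < k}) α)
    (v : Fin n → ℝ) (hv : ∀ i, 0 < v i) (hfgv : ∀ i, f v i + g v i < v i)
    (ξ : Fin n → ℝ) (hξpos : ∀ i, 0 < ξ i)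
    (hξeq : ∀ i, f v i / v i +
        (1 / (1 - α)) ^ ((r i / rmax) * ξ i) * (g v i / v i) = 1) :
    ∀ ξ' : ℝ, 0 < ξ' → (∀ i, ξ' < ξ i) →
      ∀ φ x : ℤ → Fin n → ℝ, NonnegInitD n dmax φ → IsSolutionD n f g d dmax φ x →
        ∀ i, (fun k : ℕ => (x (k : ℤ) i / v i) ^ (rmax / r i)) =O[atTop]
          fun k : ℕ => (k : ℝ) ^ (-ξ') :=
  discrete_homogeneous_nondecreasing_power_rate_stability_general n f g r hr rmax hrmax_ub hf0 hg0
    hfmono hgmono hfhom hghom d dmax hd T α hα0 hα1 hsup v hv hfgv ξ hξeq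
end

section
/- Let A, B ∈ ℝ^{n×n} be nonnegative matrices and consider the discrete-time delayed linear system Σ_L: x(k+1) = A x(k) + B x(k−d(k)) for k ∈ ℕ_0, with x(k) = φ(k) for k ∈ {−d_max,…,0}. Then there exists a vector v > 0 such that (A + B)v < v (componentwise) if and only if Σ_L is globally asymptotically stable for every nonnegative initial condition and for every delay d satisfying Assumption C. -/
open Real Filter Set Asymptotics

/-!
If `v > 0` and `(A + B) v ≤ μ v` with `μ < 1`, the order interval `[0, c v]` is invariant under
one step of the system whatever the delay, because `A x + B y ≤ c (A + B) v` for `x, y ∈ [0, c v]`;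
since `k - d(k) → ∞`, once the whole relevant history lies in `[0, c v]` the solution eventually
enters `[0, μ c v]`, and iterating gives convergence to `0`. Conversely, for the zero delay and the
initial value `1` the solution is `(A + B)^k 1`, so `(A + B)^N 1 < 1` for some `N`, and then
`v = ∑_{j ≤ N} (A + B)^j 1` is a strict sub-eigenvector.
-/

open Topology Matrix

section OrderedVectors

variable {ι : Type*} [Fintype ι]

lemma norm_le_norm_of_mem_Icc {x y : ι → ℝ} (h : x ∈ Icc 0 y) : ‖x‖ ≤ ‖y‖ := by
  refine (pi_norm_le_iff_of_nonneg (norm_nonneg y)).2 fun i => ?_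
  rw [Real.norm_of_nonneg (h.1 i)]
  exact (h.2 i).trans ((le_abs_self _).trans (norm_le_pi_norm y i))

lemma exists_forall_le_norm_smul {v : ι → ℝ} (hv : ∀ i, 0 < v i) :
    ∃ K ≥ 0, ∀ y : ι → ℝ, y ≤ (K * ‖y‖) • v := by
  have hev : ∀ᶠ a in 𝓝[>] (0 : ℝ), 0 < a ∧ ∀ i, a ≤ v i :=
    (eventually_mem_nhdsWithin (s := Ioi 0)).and <| eventually_nhdsWithin_of_eventually_nhds <|
      eventually_all.2 fun i => (eventually_lt_nhds (hv i)).mono fun _ h => h.le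
  obtain ⟨a, ha, hav⟩ := hev.exists
  refine ⟨a⁻¹, inv_nonneg.2 ha.le, fun y i => ?_⟩
  calc y i ≤ ‖y‖ := (le_abs_self _).trans (norm_le_pi_norm y i)
    _ = a⁻¹ * ‖y‖ * a := by field_simp
    _ ≤ a⁻¹ * ‖y‖ * v i := by gcongr; exact hav i

end OrderedVectors

lemma tendsto_zero_of_forall_eventually_norm_le {α β E : Type*} [SeminormedAddCommGroup E]
    {l : Filter α} {l' : Filter β} [l'.NeBot] {x : α → E} {r : β → ℝ}
    (hr : Tendsto r l' (𝓝 0)) (h : ∀ m, ∀ᶠ k in l, ‖x k‖ ≤ r m) : Tendsto x l (𝓝 0) := by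
  rw [NormedAddGroup.tendsto_nhds_zero]
  intro ε hε
  obtain ⟨m, hm⟩ := (hr.eventually (gt_mem_nhds hε)).exists
  exact (h m).mono fun k hk => hk.trans_lt hm

namespace Matrix

variable {ι : Type*} [Fintype ι] {A B M : Matrix ι ι ℝ}

lemma mulVec_nonneg_of_nonneg (hA : ∀ i j, 0 ≤ A i j) {x : ι → ℝ} (hx : 0 ≤ x) :
    0 ≤ A *ᵥ x :=
  fun i => dotProduct_nonneg_of_nonneg (fun j => hA i j) hx

lemma mulVec_le_mulVec_of_nonneg (hA : ∀ i j, 0 ≤ A i j) {x y : ι → ℝ} (h : x ≤ y) :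
    A *ᵥ x ≤ A *ᵥ y :=
  fun i => dotProduct_le_dotProduct_of_nonneg_left h (fun j => hA i j)

lemma pow_mulVec_nonneg_of_nonneg [DecidableEq ι] (hM : ∀ i j, 0 ≤ M i j) {x : ι → ℝ}
    (hx : 0 ≤ x) (k : ℕ) : 0 ≤ M ^ k *ᵥ x := by
  induction k with
  | zero => simpa using hx
  | succ k ih => rw [pow_succ', ← mulVec_mulVec]; exact mulVec_nonneg_of_nonneg hM ih

lemma add_mulVec_mem_Icc (hA : ∀ i j, 0 ≤ A i j) (hB : ∀ i j, 0 ≤ B i j) {v x y : ι → ℝ}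
    {μ t : ℝ} (hv : (A + B) *ᵥ v ≤ μ • v) (ht : 0 ≤ t) (hx : x ∈ Icc 0 (t • v))
    (hy : y ∈ Icc 0 (t • v)) : A *ᵥ x + B *ᵥ y ∈ Icc 0 ((μ * t) • v) := by
  refine ⟨add_nonneg (mulVec_nonneg_of_nonneg hA hx.1) (mulVec_nonneg_of_nonneg hB hy.1), ?_⟩
  calc A *ᵥ x + B *ᵥ y ≤ A *ᵥ (t • v) + B *ᵥ (t • v) :=
        add_le_add (mulVec_le_mulVec_of_nonneg hA hx.2) (mulVec_le_mulVec_of_nonneg hB hy.2)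
    _ = t • ((A + B) *ᵥ v) := by rw [mulVec_smul, mulVec_smul, add_mulVec, smul_add]
    _ ≤ t • (μ • v) := smul_le_smul_of_nonneg_left hv ht
    _ = (μ * t) • v := by rw [smul_smul, mul_comm]

lemma exists_lt_one_mulVec_le_smul {v : ι → ℝ} (hMv : ∀ i, (M *ᵥ v) i < v i) :
    ∃ μ ∈ Ioo (0 : ℝ) 1, M *ᵥ v ≤ μ • v := by
  have hev : ∀ᶠ μ in 𝓝[<] (1 : ℝ), μ ∈ Ioo 0 1 ∧ ∀ i, (M *ᵥ v) i < μ * v i :=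
    Filter.Eventually.and (Ioo_mem_nhdsLT one_pos) <|
      eventually_nhdsWithin_of_eventually_nhds <| eventually_all.2 fun i =>
        ((continuous_id.mul continuous_const).tendsto' 1 (v i) (one_mul _)).eventually_const_lt
          (hMv i)
  obtain ⟨μ, hμ, hle⟩ := hev.exists
  exact ⟨μ, hμ, fun i => (hle i).le⟩

lemma exists_pos_mulVec_lt_of_tendsto_pow_mulVec [DecidableEq ι] (hM : ∀ i j, 0 ≤ M i j)
    (h : Tendsto (fun k => M ^ k *ᵥ 1) atTop (𝓝 0)) :
    ∃ v : ι → ℝ, (∀ i, 0 < v i) ∧ ∀ i, (M *ᵥ v) i < v i := by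
  have hlt : ∀ᶠ k in atTop, ∀ i, (M ^ k *ᵥ 1) i < 1 :=
    eventually_all.2 fun i => (tendsto_pi_nhds.1 h i).eventually_lt_const one_pos
  obtain ⟨N, hN⟩ := eventually_atTop.1 hlt
  let v := ∑ j ∈ Finset.range (N + 1), M ^ j *ᵥ 1
  have hv1 : 1 ≤ v := by
    simp only [v]
    rw [Finset.sum_range_succ', pow_zero, one_mulVec]
    simpa using Finset.sum_nonneg fun j _ =>
      pow_mulVec_nonneg_of_nonneg hM zero_le_one (j + 1)
  have hMv : M *ᵥ v + 1 = v + M ^ (N + 1) *ᵥ 1 := by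
    simp only [v, mulVec_sum, mulVec_mulVec, ← pow_succ']
    rw [Finset.sum_range_succ' (fun j => M ^ j *ᵥ 1), Finset.sum_range_succ, pow_zero,
      one_mulVec]
    abel
  refine ⟨v, fun i => one_pos.trans_le (hv1 i), fun i => ?_⟩
  have := congrFun hMv i
  simp only [Pi.add_apply, Pi.one_apply] at this
  linarith [hN (N + 1) N.le_succ i]

end Matrix

namespace IsSolutionD

variable {n : ℕ} {A B : Matrix (Fin n) (Fin n) ℝ} {d : ℕ → ℕ} {dmax : ℕ}
  {φ x : ℤ → Fin n → ℝ} {v : Fin n → ℝ}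

lemma mem_Icc_of_initial (hA : ∀ i j, 0 ≤ A i j) (hB : ∀ i j, 0 ≤ B i j)
    (hd : ∀ k : ℕ, -(dmax : ℤ) ≤ k - d k) (hv : (A + B) *ᵥ v ≤ v) {c : ℝ} (hc : 0 ≤ c)
    (hx : IsSolutionD n (A *ᵥ ·) (B *ᵥ ·) d dmax φ x)
    (hφ : ∀ k : ℤ, -(dmax : ℤ) ≤ k → k ≤ 0 → φ k ∈ Icc 0 (c • v)) :
    ∀ k : ℤ, -(dmax : ℤ) ≤ k → x k ∈ Icc 0 (c • v) := by
  have hv' : (A + B) *ᵥ v ≤ (1 : ℝ) • v := by rwa [one_smul]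
  suffices h : ∀ N : ℕ, ∀ k : ℤ, -(dmax : ℤ) ≤ k → k ≤ N → x k ∈ Icc 0 (c • v) from
    fun k hk => h k.toNat k hk (Int.self_le_toNat k)
  intro N
  induction N with
  | zero =>
    intro k hk hk0
    rw [hx.1 k hk hk0]
    exact hφ k hk hk0
  | succ N ih =>
    intro k hk hkN
    rcases Int.le_add_one_iff.1 (show k ≤ (N : ℤ) + 1 by exact_mod_cast hkN) with hkN | rfl
    · exact ih k hk hkN
    · rw [hx.2 N, ← one_mul c]
      exact Matrix.add_mulVec_mem_Icc hA hB hv' hc (ih N (by omega) le_rfl)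
        (ih _ (hd N) (by omega))

lemma eventually_mem_Icc_mul (hA : ∀ i j, 0 ≤ A i j) (hB : ∀ i j, 0 ≤ B i j)
    (hd : Tendsto (fun k : ℕ => (k : ℤ) - d k) atTop atTop) {μ t : ℝ}
    (hv : (A + B) *ᵥ v ≤ μ • v) (ht : 0 ≤ t) (hx : IsSolutionD n (A *ᵥ ·) (B *ᵥ ·) d dmax φ x)
    (h : ∀ᶠ k in atTop, x k ∈ Icc 0 (t • v)) :
    ∀ᶠ k in atTop, x k ∈ Icc 0 ((μ * t) • v) := by
  have hsucc : ∀ᶠ k : ℕ in atTop, x ((k : ℤ) + 1) ∈ Icc 0 ((μ * t) • v) :=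
    ((tendsto_natCast_atTop_atTop.eventually h).and (hd.eventually h)).mono fun k hk =>
      (hx.2 k).symm ▸ Matrix.add_mulVec_mem_Icc hA hB hv ht hk.1 hk.2
  rw [← Nat.map_cast_int_atTop, eventually_map]
  obtain ⟨N, hN⟩ := eventually_atTop.1 hsucc
  refine eventually_atTop.2 ⟨N + 1, fun k hk => ?_⟩
  have hk' := hN (k - 1) (by omega)
  rwa [show ((k - 1 : ℕ) : ℤ) + 1 = k by omega] at hk'

lemma eventually_mem_Icc_pow (hA : ∀ i j, 0 ≤ A i j) (hB : ∀ i j, 0 ≤ B i j)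
    (hd : Tendsto (fun k : ℕ => (k : ℤ) - d k) atTop atTop) {μ c : ℝ}
    (hv : (A + B) *ᵥ v ≤ μ • v) (hμ : 0 ≤ μ) (hc : 0 ≤ c)
    (hx : IsSolutionD n (A *ᵥ ·) (B *ᵥ ·) d dmax φ x)
    (h : ∀ᶠ k in atTop, x k ∈ Icc 0 (c • v)) (m : ℕ) :
    ∀ᶠ k in atTop, x k ∈ Icc 0 ((μ ^ m * c) • v) := by
  induction m with
  | zero => simpa using h
  | succ m ih =>
    rw [pow_succ', mul_assoc]
    exact hx.eventually_mem_Icc_mul hA hB hd hv (by positivity) ih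

lemma mem_Icc_of_norm_le (hA : ∀ i j, 0 ≤ A i j) (hB : ∀ i j, 0 ≤ B i j)
    (hd : ∀ k : ℕ, -(dmax : ℤ) ≤ k - d k) (hv0 : 0 ≤ v) (hv : (A + B) *ᵥ v ≤ v) {K r : ℝ}
    (hK0 : 0 ≤ K) (hK : ∀ y, y ≤ (K * ‖y‖) • v) (hr : 0 ≤ r)
    (hx : IsSolutionD n (A *ᵥ ·) (B *ᵥ ·) d dmax φ x) (hφ : NonnegInitD n dmax φ)
    (hφr : ∀ k : ℤ, -(dmax : ℤ) ≤ k → k ≤ 0 → ‖φ k‖ ≤ r) :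
    ∀ k : ℤ, -(dmax : ℤ) ≤ k → x k ∈ Icc 0 ((K * r) • v) :=
  hx.mem_Icc_of_initial hA hB hd hv (mul_nonneg hK0 hr) fun k hk hk0 =>
    ⟨hφ k hk hk0, (hK _).trans <|
      smul_le_smul_of_nonneg_right (mul_le_mul_of_nonneg_left (hφr k hk hk0) hK0) hv0⟩

end IsSolutionD

section PositiveDelaySystem

variable {n : ℕ} {A B : Matrix (Fin n) (Fin n) ℝ} {d : ℕ → ℕ} {dmax : ℕ} {v : Fin n → ℝ}

lemma lyapunovStable_of_mulVec_le (hA : ∀ i j, 0 ≤ A i j) (hB : ∀ i j, 0 ≤ B i j)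
    (hd : ∀ k : ℕ, -(dmax : ℤ) ≤ k - d k) (hvpos : ∀ i, 0 < v i) (hv : (A + B) *ᵥ v ≤ v) :
    ∀ ε > (0 : ℝ), ∃ δ > (0 : ℝ), ∀ φ x : ℤ → Fin n → ℝ,
      NonnegInitD n dmax φ → IsSolutionD n (A *ᵥ ·) (B *ᵥ ·) d dmax φ x →
      (∀ k : ℤ, -(dmax : ℤ) ≤ k → k ≤ 0 → ‖φ k‖ < δ) → ∀ k : ℕ, ‖x (k : ℤ)‖ < ε := by
  obtain ⟨K, hK0, hK⟩ := exists_forall_le_norm_smul hvpos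
  intro ε hε
  have hKv : 0 < K * ‖v‖ + 1 := by positivity
  refine ⟨ε / (K * ‖v‖ + 1), by positivity, fun φ x hφ hx hφδ k => ?_⟩
  set δ := ε / (K * ‖v‖ + 1)
  have hδ : δ * (K * ‖v‖ + 1) = ε := div_mul_cancel₀ _ hKv.ne'
  have hxk := hx.mem_Icc_of_norm_le hA hB hd (fun i => (hvpos i).le) hv hK0 hK (by positivity)
    hφ (fun k hk hk0 => (hφδ k hk hk0).le) k (by omega)
  calc ‖x k‖ ≤ ‖(K * δ) • v‖ := norm_le_norm_of_mem_Icc hxk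
    _ = δ * (K * ‖v‖) := by rw [norm_smul, Real.norm_of_nonneg (by positivity)]; ring
    _ < ε := by nlinarith [show 0 < δ by positivity]

lemma tendsto_zero_of_mulVec_le_smul (hA : ∀ i j, 0 ≤ A i j) (hB : ∀ i j, 0 ≤ B i j)
    (hd : DelayC d dmax) (hvpos : ∀ i, 0 < v i) {μ : ℝ} (hμ : μ ∈ Ioo 0 1)
    (hv : (A + B) *ᵥ v ≤ μ • v) {φ x : ℤ → Fin n → ℝ} (hφ : NonnegInitD n dmax φ)
    (hx : IsSolutionD n (A *ᵥ ·) (B *ᵥ ·) d dmax φ x) :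
    Tendsto (fun k : ℕ => x k) atTop (𝓝 0) := by
  have hv0 : 0 ≤ v := fun i => (hvpos i).le
  obtain ⟨K, hK0, hK⟩ := exists_forall_le_norm_smul hvpos
  obtain ⟨r, hr⟩ := ((Set.finite_Icc (-(dmax : ℤ)) 0).image fun k => ‖φ k‖).bddAbove
  have hφr : ∀ k : ℤ, -(dmax : ℤ) ≤ k → k ≤ 0 → ‖φ k‖ ≤ r :=
    fun k hk hk0 => hr ⟨k, ⟨hk, hk0⟩, rfl⟩
  have hr0 : 0 ≤ r := (norm_nonneg _).trans (hφr 0 (by omega) le_rfl)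
  have hbound : ∀ᶠ k in atTop, x k ∈ Icc 0 ((K * r) • v) :=
    (eventually_ge_atTop _).mono <| hx.mem_Icc_of_norm_le hA hB hd.2 hv0
      (hv.trans (smul_le_of_le_one_left hv0 hμ.2.le)) hK0 hK hr0 hφ hφr
  have hdecay := hx.eventually_mem_Icc_pow hA hB hd.1 hv hμ.1.le (mul_nonneg hK0 hr0) hbound
  have hlim : Tendsto (fun m : ℕ => ‖(μ ^ m * (K * r)) • v‖) atTop (𝓝 0) := by
    simpa using (((tendsto_pow_atTop_nhds_zero_of_lt_one hμ.1.le hμ.2).mul_const (K * r)).smul_const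
      v).norm
  exact (tendsto_zero_of_forall_eventually_norm_le hlim fun m =>
    (hdecay m).mono fun k hk => norm_le_norm_of_mem_Icc hk).comp tendsto_natCast_atTop_atTop

lemma delayC_zero : DelayC (fun _ => 0) 0 :=
  ⟨by simpa using tendsto_natCast_atTop_atTop, fun k => by simp⟩

lemma isSolutionD_pow_mulVec (A B : Matrix (Fin n) (Fin n) ℝ) (x₀ : Fin n → ℝ) :
    IsSolutionD n (A *ᵥ ·) (B *ᵥ ·) (fun _ => 0) 0 (fun _ => x₀)
      (fun k => (A + B) ^ k.toNat *ᵥ x₀) := by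
  refine ⟨fun k hk hk0 => by simp [show k = 0 by omega], fun k => ?_⟩
  simp only [CharP.cast_eq_zero, sub_zero, Int.toNat_natCast]
  rw [show ((k : ℤ) + 1).toNat = k + 1 by omega, pow_succ', ← mulVec_mulVec, add_mulVec]

end PositiveDelaySystem

/-- Corollary (discrete-time positive linear systems): for nonnegative matrices `A` and `B`,
there exists `v > 0` with `(A+B)v < v` if and only if the delayed linear system
`x(k+1) = A x(k) + B x(k-d(k))` is globally asymptotically stable for every delay satisfying
Assumption C. -/
theorem discrete_positive_linear_delay_independent_stability
    (n : ℕ) (A B : Matrix (Fin n) (Fin n) ℝ)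
    (hA : ∀ i j, 0 ≤ A i j) (hB : ∀ i j, 0 ≤ B i j) :
    (∃ v : Fin n → ℝ, (∀ i, 0 < v i) ∧ ∀ i, (A + B).mulVec v i < v i) ↔
      ∀ d : ℕ → ℕ, ∀ dmax : ℕ, DelayC d dmax →
        GASD n (fun x => A.mulVec x) (fun x => B.mulVec x) d dmax := by
  constructor
  · rintro ⟨v, hvpos, hv⟩ d dmax hd
    obtain ⟨μ, hμ, hvμ⟩ := Matrix.exists_lt_one_mulVec_le_smul hv
    exact ⟨lyapunovStable_of_mulVec_le hA hB hd.2 hvpos fun i => (hv i).le,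
      fun φ x hφ hx => tendsto_zero_of_mulVec_le_smul hA hB hd hvpos hμ hvμ hφ hx⟩
  · intro hGAS
    refine Matrix.exists_pos_mulVec_lt_of_tendsto_pow_mulVec
      (fun i j => add_nonneg (hA i j) (hB i j)) ?_
    simpa using (hGAS _ 0 delayC_zero).2 _ _ (fun _ _ _ _ => zero_le_one)
      (isSolutionD_pow_mulVec A B 1)
end
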